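/- There exists a unique n×n matrix B = (b_{i,j}) over K with the following three properties: (1) b_{i,j} = a_{i,j} whenever i + j ≤ n; (2) for every pair (i,j) with i + j > n, the difference b_{i,j} − a_{i,j} lies in the subfield of K generated over ℚ by the indeterminates {a_{k,ℓ} : k ≥ i, ℓ ≤ j, (k,ℓ) ≠ (i,j)}; (3) b_{n,i} = a_{n,i} for all 1 ≤ i ≤ n, and for all 1 ≤ i < j ≤ n, det(B; {n−j+i, …, n}, {i, …, j}) = (−1)^{(j−i+1)(j−i)/2} · ∏_{t=0}^{j−i} a_{n−t, i+t} (the signed product of the antidiagonal entries of that block of A). -/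

import Mathlib

/-- The field of fractions of `ℚ[a_{i,j} : i,j ∈ Fin n]`. -/
abbrev GenField (n : ℕ) : Type := FractionRing (MvPolynomial (Fin n × Fin n) ℚ)

/-- The generic `n × n` matrix, whose `(i,j)` entry is the indeterminate `a_{i,j}`. -/
noncomputable def genMat (n : ℕ) : Matrix (Fin n) (Fin n) (GenField n) :=
  fun i j => algebraMap (MvPolynomial (Fin n × Fin n) ℚ) (GenField n) (MvPolynomial.X (i, j))

/-- The determinant of the square submatrix of `M` with rows `R` and columns `C`
(each taken in increasing order); defined to be `0` if `R` and `C` have different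
cardinalities.  The determinant of the empty submatrix is `1`. -/
noncomputable def minorDet {K : Type*} [CommRing K] {n : ℕ} (M : Matrix (Fin n) (Fin n) K)
    (R C : Finset (Fin n)) : K :=
  if h : R.card = C.card then
    (M.submatrix (fun i => R.orderEmbOfFin rfl i) (fun i => C.orderEmbOfFin h.symm i)).det
  else 0

/-!
Call an entry `(r, c)` (0-based) *free* if `r < n - 1` and `r + c ≥ n - 1`; all other entries of
`B` are prescribed by (1) and the bottom-row condition. Free entries correspond bijectively to the
minor conditions: `(r, c)` is the top-right corner of the square block with rows `r, …, n - 1` and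
columns `c - (n - 1 - r), …, c`. Expanding along the first row, the determinant of that block is
affine in the corner entry, with coefficient `±` the determinant of the next smaller block of the
same shape, which by induction is a signed antidiagonal product and hence nonzero. Filling the free
entries from the bottom row up, and from left to right within a row, each one is therefore uniquely
determined by entries already filled, all lying weakly south-west of it; this gives existence,
uniqueness and the subfield condition together.
-/

open Matrix Finset

section Corner

variable {R : Type*} [CommRing R] {k : ℕ}

def clearCorner (A : Matrix (Fin (k + 1)) (Fin (k + 1)) R) : Matrix (Fin (k + 1)) (Fin (k + 1)) R :=
  of fun p q => if p = 0 ∧ q = Fin.last k then 0 else A p q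

theorem submatrix_succ_castSucc_clearCorner (A : Matrix (Fin (k + 1)) (Fin (k + 1)) R) :
    (clearCorner A).submatrix Fin.succ Fin.castSucc = A.submatrix Fin.succ Fin.castSucc := by
  ext p q
  simp [clearCorner, Fin.succ_ne_zero]

theorem det_eq_det_clearCorner_add (A : Matrix (Fin (k + 1)) (Fin (k + 1)) R) :
    A.det = (clearCorner A).det +
      (-1) ^ k * A 0 (Fin.last k) * (A.submatrix Fin.succ Fin.castSucc).det := by
  have hminor : ∀ j : Fin (k + 1),
      (clearCorner A).submatrix Fin.succ j.succAbove = A.submatrix Fin.succ j.succAbove := by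
    intro j; ext p q; simp [clearCorner, Fin.succ_ne_zero]
  rw [det_succ_row_zero A, det_succ_row_zero (clearCorner A), Fin.sum_univ_castSucc,
    Fin.sum_univ_castSucc]
  simp only [hminor]
  simp [clearCorner, Fin.castSucc_ne_last]

theorem corner_eq_of_det_eq [IsDomain R] {A B : Matrix (Fin (k + 1)) (Fin (k + 1)) R}
    (hclear : clearCorner A = clearCorner B) (hdet : A.det = B.det)
    (hminor : (B.submatrix Fin.succ Fin.castSucc).det ≠ 0) :
    A 0 (Fin.last k) = B 0 (Fin.last k) := by
  have hsub : A.submatrix Fin.succ Fin.castSucc = B.submatrix Fin.succ Fin.castSucc := by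
    rw [← submatrix_succ_castSucc_clearCorner, hclear, submatrix_succ_castSucc_clearCorner]
  rw [det_eq_det_clearCorner_add A, det_eq_det_clearCorner_add B, hclear, hsub,
    add_right_inj] at hdet
  exact mul_left_cancel₀ (pow_ne_zero k (neg_ne_zero.mpr one_ne_zero))
    (mul_right_cancel₀ hminor hdet)

end Corner

theorem det_mem_of_forall_mem {R S m : Type*} [CommRing R] [SetLike S R] [SubringClass S R]
    [Fintype m] [DecidableEq m] {s : S} {M : Matrix m m R} (h : ∀ i j, M i j ∈ s) :
    M.det ∈ s := by
  rw [det_apply]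
  exact sum_mem fun σ _ => zsmul_mem (prod_mem fun i _ => h _ _) _

section Window

variable {K : Type*} {n : ℕ}

theorem minorDet_eq_det_submatrix [CommRing K] {k : ℕ} (M : Matrix (Fin n) (Fin n) K)
    {R C : Finset (Fin n)} (hR : R.card = k) (hC : C.card = k)
    {f g : Fin k → Fin n} (hfR : ∀ p, f p ∈ R) (hgC : ∀ q, g q ∈ C)
    (hf : StrictMono f) (hg : StrictMono g) :
    minorDet M R C = (M.submatrix f g).det := by
  subst hR
  rw [minorDet, dif_pos hC.symm, orderEmbOfFin_unique rfl hfR hf,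
    orderEmbOfFin_unique hC hgC hg]

def entryOrZero [Zero K] (M : Matrix (Fin n) (Fin n) K) (r c : ℕ) : K :=
  if h : r < n ∧ c < n then M ⟨r, h.1⟩ ⟨c, h.2⟩ else 0

theorem entryOrZero_of_lt [Zero K] {r c : ℕ} (M : Matrix (Fin n) (Fin n) K)
    (hr : r < n) (hc : c < n) : entryOrZero M r c = M ⟨r, hr⟩ ⟨c, hc⟩ :=
  dif_pos ⟨hr, hc⟩

def window (f : ℕ → ℕ → K) (r c k : ℕ) : Matrix (Fin k) (Fin k) K :=
  of fun p q => f (r + p) (c + q)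

theorem submatrix_succ_castSucc_window (f : ℕ → ℕ → K) (r c k : ℕ) :
    (window f r c (k + 1)).submatrix Fin.succ Fin.castSucc = window f (r + 1) c k := by
  ext p q
  simp [window, add_assoc, add_comm 1]

theorem minorDet_Ici_Icc [CommRing K] (M : Matrix (Fin n) (Fin n) K)
    {i j : Fin n} {m : ℕ} (hm : (j : ℕ) = i + m) {x : Fin n} (hx : (x : ℕ) + m + 1 = n) :
    minorDet M (Ici x) (Icc i j) = (window (entryOrZero M) x i (m + 1)).det := by
  rw [minorDet_eq_det_submatrix M (k := m + 1) (by simp; omega) (by simp; omega)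
    (f := fun p => ⟨x + p, by omega⟩) (g := fun q => ⟨i + q, by omega⟩)]
  · congr 1
    ext p q
    simp only [submatrix_apply, window, of_apply]
    rw [entryOrZero_of_lt]
  · intro p; simp [Fin.le_def]
  · intro q; simp [Fin.le_def]; omega
  · exact fun p q h => Fin.mk_lt_mk.mpr (Nat.add_lt_add_left h _)
  · exact fun p q h => Fin.mk_lt_mk.mpr (Nat.add_lt_add_left h _)

end Window

theorem genMat_ne_zero {n : ℕ} (i j : Fin n) : genMat n i j ≠ 0 :=
  (IsFractionRing.to_map_eq_zero_iff).not.mpr (MvPolynomial.X_ne_zero _)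

/-- The determinant of the antidiagonal part of the block of `genMat n` with rows
`n - 1 - k, …, n - 1` and columns `i, …, i + k`. -/
noncomputable def antidiagDet (n i k : ℕ) : GenField n :=
  (-1) ^ ((k + 1) * k / 2) * ∏ t ∈ range (k + 1), entryOrZero (genMat n) (n - 1 - t) (i + t)

theorem antidiagDet_succ (n i k : ℕ) :
    antidiagDet n i (k + 1) =
      (-1) ^ (k + 1) * entryOrZero (genMat n) (n - 2 - k) (i + k + 1) * antidiagDet n i k := by
  have hexp : (k + 1 + 1) * (k + 1) / 2 = (k + 1) * k / 2 + (k + 1) := by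
    rw [show (k + 1 + 1) * (k + 1) = (k + 1) * k + (k + 1) * 2 by ring,
      Nat.add_mul_div_right _ _ two_pos]
  rw [antidiagDet, antidiagDet, hexp, prod_range_succ, pow_add,
    show n - 1 - (k + 1) = n - 2 - k by omega, ← add_assoc]
  ring

theorem antidiagDet_ne_zero {n i k : ℕ} (h : i + k < n) : antidiagDet n i k ≠ 0 := by
  refine mul_ne_zero (pow_ne_zero _ (neg_ne_zero.mpr one_ne_zero)) (prod_ne_zero_iff.mpr ?_)
  intro t ht
  have := mem_range.mp ht
  rw [entryOrZero_of_lt _ (by omega) (by omega)]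
  exact genMat_ne_zero _ _

theorem antidiagDet_eq_prod_attach {n : ℕ} (hn : 1 ≤ n) (i j : Fin n) :
    antidiagDet n i (j - i) =
      (-1 : GenField n) ^ (((j : ℕ) - i + 1) * (j - i) / 2) *
        ∏ t ∈ (range ((j : ℕ) - i + 1)).attach,
          genMat n ⟨n - 1 - t, (Nat.sub_le _ _).trans_lt (Nat.sub_lt hn one_pos)⟩
            ⟨i + t, by have := mem_range.mp t.2; omega⟩ := by
  rw [antidiagDet, ← prod_attach]
  exact congrArg _ (prod_congr rfl fun t _ => entryOrZero_of_lt _ _ _)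

/-- On a free entry `(r, c)` (the `if` condition), with `k = n - 2 - r`, this is the corner value
that gives the `(k + 2)`-block with top-left corner `(r, c - k - 1)` the determinant
`antidiagDet n (c - k - 1) (k + 1)`, solved from `det_eq_det_clearCorner_add`; the corner is zeroed
in the recursive call, so that only earlier entries are used. -/
noncomputable def normalizedEntry (n : ℕ) : ℕ → ℕ → GenField n := fun r c =>
  if r + 1 < n ∧ n ≤ r + c + 1 ∧ c < n then
    entryOrZero (genMat n) r c -
      (of fun p q : Fin (n - 2 - r + 2) =>
          if p = 0 ∧ q = Fin.last _ then 0
          else normalizedEntry n (r + p) (c - (n - 1 - r) + q)).det /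
        ((-1) ^ (n - 2 - r + 1) *
          (of fun p q : Fin (n - 2 - r + 1) =>
            normalizedEntry n (r + 1 + p) (c - (n - 1 - r) + q)).det)
  else entryOrZero (genMat n) r c
termination_by r c => (n - r, c)
decreasing_by
  all_goals
    rw [Prod.lex_def]
    simp only [Fin.ext_iff, Fin.val_zero, Fin.val_last] at *
    omega

section NormalizedEntry

variable {n : ℕ}

theorem normalizedEntry_of_not_free {r c : ℕ} (h : ¬(r + 1 < n ∧ n ≤ r + c + 1 ∧ c < n)) :
    normalizedEntry n r c = entryOrZero (genMat n) r c := by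
  rw [normalizedEntry, if_neg h]

theorem normalizedEntry_of_free {r c k i : ℕ} (hk : r + k + 2 = n) (hi : c = i + k + 1)
    (hc : c < n) :
    normalizedEntry n r c = entryOrZero (genMat n) r c -
      (clearCorner (window (normalizedEntry n) r i (k + 2))).det /
        ((-1) ^ (k + 1) * (window (normalizedEntry n) (r + 1) i (k + 1)).det) := by
  obtain rfl : k = n - 2 - r := by omega
  obtain rfl : i = c - (n - 1 - r) := by omega
  rw [normalizedEntry, if_pos (by omega)]
  rfl

theorem det_window_normalizedEntry {i : ℕ} : ∀ {k : ℕ}, i + k < n →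
    (window (normalizedEntry n) (n - 1 - k) i (k + 1)).det = antidiagDet n i k
  | 0, _ => by
    rw [det_fin_one, window, of_apply, normalizedEntry_of_not_free (by omega)]
    simp [antidiagDet]
  | k + 1, h => by
    have hminor :
        (window (normalizedEntry n) (n - 2 - k + 1) i (k + 1)).det = antidiagDet n i k := by
      rw [show n - 2 - k + 1 = n - 1 - k by omega]
      exact det_window_normalizedEntry (by omega)
    have hcorner : window (normalizedEntry n) (n - 2 - k) i (k + 2) 0 (Fin.last (k + 1)) =
        normalizedEntry n (n - 2 - k) (i + k + 1) := by
      simp [window, add_assoc]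
    have hM := antidiagDet_ne_zero (n := n) (i := i) (k := k) (by omega)
    rw [show n - 1 - (k + 1) = n - 2 - k by omega, det_eq_det_clearCorner_add,
      submatrix_succ_castSucc_window, hminor, hcorner, normalizedEntry_of_free (by omega) rfl h,
      hminor, antidiagDet_succ]
    field_simp
    ring

def quadrantGens (i j : Fin n) : Set (GenField n) :=
  {x | ∃ k l : Fin n, i ≤ k ∧ l ≤ j ∧ (k, l) ≠ (i, j) ∧ x = genMat n k l}

theorem quadrantGens_mono {i j i' j' : Fin n} (hi : i ≤ i') (hj : j' ≤ j)
    (hne : (i', j') ≠ (i, j)) :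
    quadrantGens i' j' ⊆ quadrantGens i j := by
  rintro x ⟨k, l, hk, hl, hkl, rfl⟩
  refine ⟨k, l, hi.trans hk, hl.trans hj, ?_, rfl⟩
  rintro ⟨⟩
  exact hne (Prod.ext (le_antisymm hk hi) (le_antisymm hj hl))

theorem normalizedEntry_sub_mem_closure (r c : ℕ) (hr : r < n) (hc : c < n) :
    normalizedEntry n r c - genMat n ⟨r, hr⟩ ⟨c, hc⟩ ∈
      Subfield.closure (quadrantGens ⟨r, hr⟩ ⟨c, hc⟩) := by
  by_cases hfree : r + 1 < n ∧ n ≤ r + c + 1 ∧ c < n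
  swap
  · rw [normalizedEntry_of_not_free hfree, entryOrZero_of_lt _ hr hc, sub_self]
    exact zero_mem _
  obtain ⟨k, hk⟩ : ∃ k, r + k + 2 = n := ⟨n - 2 - r, by omega⟩
  obtain ⟨i, hi⟩ : ∃ i, c = i + k + 1 := ⟨c - k - 1, by omega⟩
  have earlier : ∀ r' c', r ≤ r' → (hr' : r' < n) → c' ≤ c → (r', c') ≠ (r, c) →
      normalizedEntry n r' c' ∈ Subfield.closure (quadrantGens ⟨r, hr⟩ ⟨c, hc⟩) := by
    intro r' c' hrr' hr' hcc' hne
    have hne' : ((⟨r', hr'⟩ : Fin n), (⟨c', by omega⟩ : Fin n)) ≠ (⟨r, hr⟩, ⟨c, hc⟩) := by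
      simpa [Prod.ext_iff, Fin.ext_iff] using hne
    rw [← sub_add_cancel (normalizedEntry n r' c') (genMat n ⟨r', hr'⟩ ⟨c', by omega⟩)]
    exact add_mem (Subfield.closure_mono (quadrantGens_mono hrr' hcc' hne')
      (normalizedEntry_sub_mem_closure r' c' hr' (by omega)))
      (Subfield.subset_closure ⟨_, _, hrr', hcc', hne', rfl⟩)
  have hentries : ∀ p q, clearCorner (window (normalizedEntry n) r i (k + 2)) p q ∈
      Subfield.closure (quadrantGens ⟨r, hr⟩ ⟨c, hc⟩) := by
    intro p q
    simp only [clearCorner, window, of_apply]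
    split_ifs with hpq
    · exact zero_mem _
    · refine earlier _ _ (by omega) (by omega) (by omega) ?_
      simp only [Fin.ext_iff, Fin.val_zero, Fin.val_last] at hpq
      simp only [ne_eq, Prod.ext_iff]
      omega
  rw [normalizedEntry_of_free hk hi hc, entryOrZero_of_lt _ hr hc, sub_sub_cancel_left,
    ← submatrix_succ_castSucc_window, ← submatrix_succ_castSucc_clearCorner]
  exact neg_mem (div_mem (det_mem_of_forall_mem hentries)
    (mul_mem (pow_mem (neg_mem (one_mem _)) _)
      (det_mem_of_forall_mem fun p q => hentries p.succ q.castSucc)))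
termination_by (n - r, c)
decreasing_by
  rw [Prod.lex_def]
  simp only [ne_eq, Prod.ext_iff] at hne
  omega

theorem eq_normalizedEntry_of_det_window_eq {f : ℕ → ℕ → GenField n}
    (hfixed : ∀ r c, r < n → c < n → ¬(r + 1 < n ∧ n ≤ r + c + 1 ∧ c < n) →
      f r c = entryOrZero (genMat n) r c)
    (hdet : ∀ k i, i + k + 1 < n →
      (window f (n - 2 - k) i (k + 2)).det = antidiagDet n i (k + 1))
    (r c : ℕ) (hr : r < n) (hc : c < n) : f r c = normalizedEntry n r c := by
  by_cases hfree : r + 1 < n ∧ n ≤ r + c + 1 ∧ c < n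
  swap
  · rw [hfixed r c hr hc hfree, normalizedEntry_of_not_free hfree]
  obtain ⟨k, hk⟩ : ∃ k, r + k + 2 = n := ⟨n - 2 - r, by omega⟩
  obtain ⟨i, rfl⟩ : ∃ i, c = i + k + 1 := ⟨c - k - 1, by omega⟩
  have hclear : clearCorner (window f r i (k + 2)) =
      clearCorner (window (normalizedEntry n) r i (k + 2)) := by
    ext p q
    simp only [clearCorner, window, of_apply]
    split_ifs with hpq
    · rfl
    · simp only [Fin.ext_iff, Fin.val_zero, Fin.val_last] at hpq
      exact eq_normalizedEntry_of_det_window_eq hfixed hdet _ _ (by omega) (by omega)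
  have hdet' : (window f r i (k + 2)).det = (window (normalizedEntry n) r i (k + 2)).det := by
    rw [show r = n - 2 - k by omega, hdet k i hc, show n - 2 - k = n - 1 - (k + 1) by omega,
      det_window_normalizedEntry (k := k + 1) hc]
  have hminor :
      ((window (normalizedEntry n) r i (k + 2)).submatrix Fin.succ Fin.castSucc).det ≠ 0 := by
    rw [submatrix_succ_castSucc_window, show r + 1 = n - 1 - k by omega,
      det_window_normalizedEntry (by omega)]
    exact antidiagDet_ne_zero (by omega)
  simpa [window, add_assoc] using corner_eq_of_det_eq hclear hdet' hminor
termination_by (n - r, c)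
decreasing_by
  rw [Prod.lex_def]
  simp only [Fin.ext_iff, Fin.val_zero, Fin.val_last] at *
  omega

end NormalizedEntry

/-- there is a unique `n × n` matrix `B` over `K` with (using 1-based
indices `i+1`, `j+1` for the 0-based `i`, `j`):
(1) `b_{i,j} = a_{i,j}` whenever `i + j ≤ n`;
(2) for `i + j > n`, `b_{i,j} − a_{i,j}` lies in the subfield of `K` generated by
    `{a_{k,ℓ} : k ≥ i, ℓ ≤ j, (k,ℓ) ≠ (i,j)}` (any subfield of `K` contains `ℚ`);
(3) the bottom row of `B` is that of `A`, and for `i < j`,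
    `det(B; {n−j+i,…,n}, {i,…,j}) = (−1)^{(j−i+1)(j−i)/2} ∏_{t=0}^{j−i} a_{n−t,i+t}`. -/
theorem exists_unique_antidiagonal_normalized_matrix (n : ℕ) (hn : 1 ≤ n) :
    ∃! B : Matrix (Fin n) (Fin n) (GenField n),
      (∀ i j : Fin n, (i : ℕ) + 1 + ((j : ℕ) + 1) ≤ n → B i j = genMat n i j) ∧
      (∀ i j : Fin n, n < (i : ℕ) + 1 + ((j : ℕ) + 1) →
        B i j - genMat n i j ∈ Subfield.closure
          {x : GenField n | ∃ k l : Fin n, i ≤ k ∧ l ≤ j ∧ (k, l) ≠ (i, j) ∧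
            x = genMat n k l}) ∧
      (∀ i : Fin n, B ⟨n - 1, by omega⟩ i = genMat n ⟨n - 1, by omega⟩ i) ∧
      (∀ i j : Fin n, i < j →
        minorDet B (Finset.Ici (⟨n - 1 - ((j : ℕ) - (i : ℕ)), by omega⟩ : Fin n))
            (Finset.Icc i j) =
          (-1 : GenField n) ^ ((((j : ℕ) - (i : ℕ)) + 1) * ((j : ℕ) - (i : ℕ)) / 2) *
            ∏ t ∈ (Finset.range ((j : ℕ) - (i : ℕ) + 1)).attach,
              genMat n ⟨n - 1 - (t : ℕ), by omega⟩
                ⟨(i : ℕ) + (t : ℕ), by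
                  have ht := Finset.mem_range.mp t.2
                  have hj := j.isLt
                  omega⟩) := by
  refine ⟨of fun r c => normalizedEntry n r c, ⟨?_, ?_, ?_, ?_⟩, ?_⟩
  · intro i j hij
    exact (normalizedEntry_of_not_free (by omega)).trans (entryOrZero_of_lt _ _ _)
  · intro i j _
    exact normalizedEntry_sub_mem_closure i j i.isLt j.isLt
  · intro i
    exact (normalizedEntry_of_not_free (by simp only; omega)).trans (entryOrZero_of_lt _ _ _)
  · intro i j hij
    rw [minorDet_Ici_Icc _ (m := j - i) (by omega) (by simp only; omega),
      ← antidiagDet_eq_prod_attach hn, ← det_window_normalizedEntry (by omega)]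
    congr 1
    ext p q
    exact entryOrZero_of_lt _ (by simp only; omega) (by omega)
  · rintro B ⟨hupper, -, hlast, hminor⟩
    ext r c
    refine (entryOrZero_of_lt B r.isLt c.isLt).symm.trans
      (eq_normalizedEntry_of_det_window_eq ?_ ?_ r c r.isLt c.isLt)
    · intro r c hr hc hfree
      rw [entryOrZero_of_lt _ hr hc, entryOrZero_of_lt _ hr hc]
      rcases (by omega : r + 1 = n ∨ r + c + 2 ≤ n) with hr' | hrc
      · obtain rfl : r = n - 1 := by omega
        exact hlast _
      · exact hupper _ _ (by simp only; omega)
    · intro k i h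
      have hlt : (⟨i, by omega⟩ : Fin n) < ⟨i + k + 1, h⟩ := Fin.mk_lt_mk.mpr (by omega)
      have := hminor _ _ hlt
      rw [minorDet_Ici_Icc _ (m := k + 1) rfl (by simp only; omega),
        ← antidiagDet_eq_prod_attach hn] at this
      simpa only [show i + k + 1 - i = k + 1 by omega, show n - 1 - (k + 1) = n - 2 - k by omega]
        using this
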